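/- Let $\pi = \pi_{k,n}$ (so $\pi(x) = x + (n-k) \bmod n$) and let $A \subseteq [n]$ with $|A| \le k-1$. Then the decorated permutation $\sigma = \overleftarrow{\rho_A}(\pi)$ obtained by freezing the values in $A$ and cyclically shifting the remaining values one place to the left (decorating new fixed points as underlined) has exactly $k-1$ weak 1-excedances; specifically $W_1(\sigma) = [k] \setminus \{j\}$ where $j = \max\{ i \in [k] : \pi(i) \notin A \}$. -/

import Mathlib

open Fin.NatCast in
/-- The cyclic interval `{a, a+1, ..., a+l-1}` in `Fin n` (taken mod `n`). -/
def cycInterval {n : ℕ} [NeZero n] (a : Fin n) (l : ℕ) : Finset (Fin n) :=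
  (Finset.range l).image fun t : ℕ => a + (t : Fin n)

open Fin.NatCast in
/-- The decorated permutation `π_{k,n}` of `U_{k,n}`: `i ↦ i + (n-k) (mod n)`. -/
def piU (n k : ℕ) [NeZero n] : Equiv.Perm (Fin n) :=
  Equiv.addRight (((n - k : ℕ)) : Fin n)

/-- The cyclic `i`-order on `Fin n`: `a <_i b` iff `a - i < b - i`. -/
def ltI {n : ℕ} [NeZero n] (i a b : Fin n) : Prop := a - i < b - i

/-- The set of weak `i`-excedances of `σ` with decoration `D`
(`D j = true` meaning an overlined fixed point `j`). -/
noncomputable def weakExcSet {n : ℕ} [NeZero n] (σ : Fin n → Fin n) (D : Fin n → Bool)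
    (i : Fin n) : Finset (Fin n) :=
  by classical exact Finset.univ.filter fun j => (σ j = j ∧ D j = true) ∨ ltI i j (σ j)

open Fin.NatCast in
/-- The next position after `p` (cyclically) not belonging to the frozen set `F`. -/
noncomputable def nextFree {n : ℕ} [NeZero n] (F : Finset (Fin n)) (p : Fin n) : Fin n :=
  p + ((sInf {t : ℕ | 1 ≤ t ∧ p + (t : Fin n) ∉ F} : ℕ) : Fin n)

open Fin.NatCast in
/-- The previous position before `p` (cyclically) not belonging to the frozen set `F`. -/
noncomputable def prevFree {n : ℕ} [NeZero n] (F : Finset (Fin n)) (p : Fin n) : Fin n :=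
  p - ((sInf {t : ℕ | 1 ≤ t ∧ p - (t : Fin n) ∉ F} : ℕ) : Fin n)

/-- `ρ←_A(π)`: freeze the values in `A` and cyclically shift the remaining values one
place to the left (skipping frozen positions). -/
noncomputable def rhoL {n : ℕ} [NeZero n] (π : Equiv.Perm (Fin n)) (A : Finset (Fin n)) :
    Fin n → Fin n :=
  fun p => if π p ∈ A then π p
    else π (nextFree (Finset.univ.filter fun q => π q ∈ A) p)

/-- `ρ→_A(π)`: freeze the values in `A` and cyclically shift the remaining values one
place to the right (skipping frozen positions). -/
noncomputable def rhoR {n : ℕ} [NeZero n] (π : Equiv.Perm (Fin n)) (A : Finset (Fin n)) :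
    Fin n → Fin n :=
  fun p => if π p ∈ A then π p
    else π (prevFree (Finset.univ.filter fun q => π q ∈ A) p)

/-!
Call a position `p` frozen when `π p ∈ A`. A frozen position keeps its value `π p`, which is a
weak excedance exactly when `p < k`. A free position `p` receives `π q`, where `q = p + t` is the
next free position; as at most `|A| ≤ k - 1` positions are frozen, `1 ≤ t ≤ k`, and then
`p < π q` holds exactly when `p + t < k`, i.e. when `q` is reached without leaving `[0, k)`.
That happens precisely for the free positions before `j`, the last free position of `[0, k)`.
-/

open Finset Fin.NatCast

section NextFree

variable {n : ℕ} [NeZero n] (F : Finset (Fin n)) (p : Fin n)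

lemma Fin.val_add_natCast_cases {s : ℕ} (hs : s ≤ n) :
    (p.val + s < n ∧ (p + (s : Fin n)).val = p.val + s) ∨
      (n ≤ p.val + s ∧ (p + (s : Fin n)).val = p.val + s - n) := by
  have hp := p.isLt
  rw [Fin.val_add, Fin.val_natCast, Nat.add_mod_mod]
  by_cases h : p.val + s < n
  · exact .inl ⟨h, Nat.mod_eq_of_lt h⟩
  · exact .inr ⟨by omega, by rw [Nat.mod_eq_sub_mod (by omega), Nat.mod_eq_of_lt (by omega)]⟩

noncomputable def nextFreeDist : ℕ := sInf {t : ℕ | 1 ≤ t ∧ p + (t : Fin n) ∉ F}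

lemma nextFree_eq_add_nextFreeDist : nextFree F p = p + (nextFreeDist F p : Fin n) := rfl

lemma nextFreeDist_le {s : ℕ} (hs : 1 ≤ s) (hsF : p + (s : Fin n) ∉ F) :
    nextFreeDist F p ≤ s :=
  Nat.sInf_le ⟨hs, hsF⟩

variable {F p}

lemma nextFreeDist_mem (hp : p ∉ F) :
    1 ≤ nextFreeDist F p ∧ p + (nextFreeDist F p : Fin n) ∉ F :=
  Nat.sInf_mem (s := {t : ℕ | 1 ≤ t ∧ p + (t : Fin n) ∉ F})
    ⟨n, NeZero.one_le, by simpa using hp⟩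

lemma add_mem_of_lt_nextFreeDist {s : ℕ} (hs : 1 ≤ s) (hst : s < nextFreeDist F p) :
    p + (s : Fin n) ∈ F := by
  by_contra h
  exact Nat.notMem_of_lt_sInf hst ⟨hs, h⟩

lemma nextFreeDist_le_card_add_one (hp : p ∉ F) : nextFreeDist F p ≤ F.card + 1 := by
  set t := nextFreeDist F p
  have htn : t ≤ n := nextFreeDist_le F p NeZero.one_le (by simpa using hp)
  have hinj : Set.InjOn (fun s : ℕ => p + (s : Fin n)) (Ico 1 t) := by
    intro a ha b hb hab
    simp only [coe_Ico, Set.mem_Ico] at ha hb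
    have := congrArg Fin.val (add_left_cancel hab)
    rwa [Fin.val_natCast, Fin.val_natCast, Nat.mod_eq_of_lt (by omega),
      Nat.mod_eq_of_lt (by omega)] at this
  have hsub : (Ico 1 t).image (fun s : ℕ => p + (s : Fin n)) ⊆ F := by
    simp only [subset_iff, mem_image, mem_Ico]
    rintro _ ⟨s, ⟨hs1, hst⟩, rfl⟩
    exact add_mem_of_lt_nextFreeDist hs1 hst
  have := card_le_card hsub
  rw [card_image_of_injOn hinj, Nat.card_Ico] at this
  omega

lemma add_nextFreeDist_lt_iff {k : ℕ} (hkn : k ≤ n) {j : Fin n}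
    (hj : IsGreatest {i : Fin n | i.val < k ∧ i ∉ F} j) (hp : p ∉ F) :
    p.val + nextFreeDist F p < k ↔ p < j := by
  obtain ⟨⟨hjk, hjF⟩, hjmax⟩ := hj
  obtain ⟨ht1, htF⟩ := nextFreeDist_mem hp
  constructor
  · intro h
    have hq : (p + (nextFreeDist F p : Fin n)).val = p.val + nextFreeDist F p := by
      rcases Fin.val_add_natCast_cases p (s := nextFreeDist F p) (by omega) with h' | h' <;> omega
    have := Fin.le_def.1 (hjmax ⟨hq ▸ h, htF⟩)
    rw [Fin.lt_def]
    omega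
  · intro hpj
    have hj' : p + ((j.val - p.val : ℕ) : Fin n) = j := by
      ext
      rcases Fin.val_add_natCast_cases p (s := j.val - p.val) (by omega) with h' | h' <;> omega
    have := nextFreeDist_le F p (s := j.val - p.val) (by rw [Fin.lt_def] at hpj; omega)
      (by rwa [hj'])
    rw [Fin.lt_def] at hpj
    omega

omit [NeZero n] in
lemma exists_isGreatest_val_lt_notMem {k : ℕ} (hkn : k ≤ n) (hF : #F < k) :
    ∃ j, IsGreatest {i : Fin n | i.val < k ∧ i ∉ F} j := by
  set T : Finset (Fin n) := {i | i.val < k ∧ i ∉ F}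
  have hcard : k ≤ #T + #F :=
    calc k = #({i | i.val < k} : Finset (Fin n)) := by
          rw [Fin.card_filter_val_lt, min_eq_right hkn]
      _ ≤ #(T ∪ F) := card_le_card fun i hi => by by_cases hiF : i ∈ F <;> simp_all [T]
      _ ≤ #T + #F := card_union_le _ _
  have hT : T.Nonempty := card_pos.1 (by omega)
  exact ⟨T.max' hT, by simpa [T] using T.isGreatest_max' hT⟩

end NextFree

section PiU

variable {n k : ℕ} [NeZero n]

lemma piU_add_natCast (p : Fin n) (t : ℕ) :
    piU n k (p + (t : Fin n)) = p + ((t + (n - k) : ℕ) : Fin n) := by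
  simp [piU, add_assoc]

lemma piU_eq_self_or_lt_iff (hk : 0 < k) (hkn : k ≤ n) (p : Fin n) :
    piU n k p = p ∨ p < piU n k p ↔ p.val < k := by
  have h := piU_add_natCast (k := k) p 0
  rw [Nat.cast_zero, add_zero, zero_add] at h
  rw [h, Fin.ext_iff, Fin.lt_def]
  rcases Fin.val_add_natCast_cases p (s := n - k) (by omega) with h' | h' <;> omega

lemma lt_piU_add_iff {t : ℕ} (ht : 1 ≤ t) (htk : t ≤ k) (hkn : k ≤ n) (p : Fin n) :
    p < piU n k (p + (t : Fin n)) ↔ p.val + t < k := by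
  rw [piU_add_natCast, Fin.lt_def]
  rcases Fin.val_add_natCast_cases p (s := t + (n - k)) (by omega) with h' | h' <;> omega

end PiU

section Rho

variable {n : ℕ} [NeZero n] (π : Equiv.Perm (Fin n)) (A : Finset (Fin n))

omit [NeZero n] in
lemma card_filter_perm_mem : #{q | π q ∈ A} = #A := by
  rw [← card_map π.toEmbedding]
  congr
  ext x
  simp

variable {π A} {p : Fin n}

lemma rhoL_of_mem (hp : π p ∈ A) : rhoL π A p = π p := if_pos hp

lemma rhoL_of_notMem (hp : π p ∉ A) : rhoL π A p = π (nextFree {q | π q ∈ A} p) := if_neg hp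

lemma mem_weakExcSet_zero {σ : Fin n → Fin n} {D : Fin n → Bool} :
    p ∈ weakExcSet σ D 0 ↔ (σ p = p ∧ D p = true) ∨ p < σ p := by
  simp [weakExcSet, ltI]

end Rho

lemma mem_weakExcSet_rhoL_piU_iff {n k : ℕ} [NeZero n] (hk : 0 < k) (hkn : k ≤ n)
    {A : Finset (Fin n)} (hA : #A < k) {j : Fin n}
    (hj : IsGreatest {i : Fin n | i.val < k ∧ piU n k i ∉ A} j)
    (p : Fin n) :
    p ∈ weakExcSet (rhoL (piU n k) A) (fun p => decide (piU n k p = p ∧ piU n k p ∈ A)) 0 ↔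
      p.val < k ∧ p ≠ j := by
  rw [mem_weakExcSet_zero]
  by_cases hp : piU n k p ∈ A
  · have hpj : p ≠ j := fun h => hj.1.2 (h ▸ hp)
    simpa [rhoL_of_mem hp, hp, hpj] using piU_eq_self_or_lt_iff hk hkn p
  · set F : Finset (Fin n) := {q | piU n k q ∈ A}
    have hpF : p ∉ F := by simpa [F] using hp
    have hjF : IsGreatest {i : Fin n | i.val < k ∧ i ∉ F} j := by simpa [F] using hj
    have ht1 := (nextFreeDist_mem hpF).1
    have htk : nextFreeDist F p ≤ k := by
      have := nextFreeDist_le_card_add_one hpF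
      rw [card_filter_perm_mem] at this
      omega
    rw [rhoL_of_notMem hp, nextFree_eq_add_nextFreeDist, lt_piU_add_iff ht1 htk hkn,
      add_nextFreeDist_lt_iff hkn hjF hpF]
    simp only [hp, and_false, decide_false, Bool.false_eq_true, false_or]
    exact ⟨fun h => ⟨(Fin.lt_def.1 h).trans hj.1.1, h.ne⟩,
      fun ⟨hpk, hpj⟩ => lt_of_le_of_ne (hj.2 ⟨hpk, hp⟩) hpj⟩

/-- for `A ⊆ [n]` with `|A| ≤ k - 1`, the decorated permutation
`σ = ρ←_A(π_{k,n})` satisfies `W_1(σ) = [k] \ {j}`, where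
`j = max{ i ∈ [k] : π_{k,n}(i) ∉ A }`; in particular `σ` has exactly `k - 1` weak
1-excedances.  (New fixed points are underlined; only frozen old fixed points keep an
overline.) -/
theorem rhoL_weak_excedances (n k : ℕ) [NeZero n] (hk : 0 < k) (hkn : k ≤ n)
    (A : Finset (Fin n)) (hA : A.card ≤ k - 1) :
    ∃ j : Fin n, (j.val < k ∧ piU n k j ∉ A) ∧
      (∀ i : Fin n, i.val < k → piU n k i ∉ A → i ≤ j) ∧
      weakExcSet (rhoL (piU n k) A) (fun p => decide (piU n k p = p ∧ piU n k p ∈ A)) 0 =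
        (Finset.univ.filter fun i : Fin n => i.val < k).erase j ∧
      (weakExcSet (rhoL (piU n k) A)
        (fun p => decide (piU n k p = p ∧ piU n k p ∈ A)) 0).card = k - 1 := by
  have hAk : #A < k := by omega
  obtain ⟨j, hjF⟩ := exists_isGreatest_val_lt_notMem hkn
    (F := {q | piU n k q ∈ A}) (by rwa [card_filter_perm_mem])
  have hj : IsGreatest {i : Fin n | i.val < k ∧ piU n k i ∉ A} j := by simpa using hjF
  have hW : weakExcSet (rhoL (piU n k) A) (fun p => decide (piU n k p = p ∧ piU n k p ∈ A)) 0 =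
      ({i | i.val < k} : Finset (Fin n)).erase j := by
    ext p
    rw [mem_weakExcSet_rhoL_piU_iff hk hkn hAk hj, mem_erase, mem_filter]
    simp only [mem_univ, true_and, and_comm]
  refine ⟨j, hj.1, fun i hik hiA => hj.2 ⟨hik, hiA⟩, hW, ?_⟩
  rw [hW, card_erase_of_mem (by simpa using hj.1.1), Fin.card_filter_val_lt, min_eq_right hkn]
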